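/- In a deterministic finite-horizon environment with horizon T, if a policy π satisfies D_TV(π(·|s,g,h), π*(·|s,g,h)) ≤ ε for all states s, goals g, and horizons h, where π* is the optimal goal-reaching policy, then the goal-reaching objectives satisfy J(π*) − J(π) ≤ εT, where J(π) = E_{g∼p(g)}[P_{π_g}(s_T = g)]. -/
import Mathlib


/-- The deterministic state sequence generated from `s0` by applying actions `as`. -/
def runDyn {S A : Type} (f : S → A → S) (s0 : S) (as : ℕ → A) : ℕ → S
  | 0 => s0
  | t + 1 => f (runDyn f s0 as t) (as t)

/-- Extend a finite action sequence `Fin T → A` to `ℕ → A` (with junk past `T`). -/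
def extSeq {A : Type} [Inhabited A] (T : ℕ) (as : Fin T → A) : ℕ → A :=
  fun t => if h : t < T then as ⟨t, h⟩ else default

/-- Goal-reaching objective `J(π) = E_{g∼p(g)}[P_{π_g}(s_T = g)]` for a goal-conditioned
policy `π(a|s,g,h)` in a deterministic environment with dynamics `f`, horizon `T`,
and initial state `s0`: the probability of an action sequence is the product of the
per-step policy probabilities (with remaining horizon `T - t`). -/
noncomputable def Jdet {S A : Type} [Fintype S] [Fintype A] [Inhabited A] [DecidableEq S]
    (f : S → A → S) (T : ℕ) (s0 : S) (pg : S → ℝ) (π : S → S → ℕ → A → ℝ) : ℝ :=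
  ∑ g, pg g *
    ∑ as : Fin T → A,
      (∏ t : Fin T, π (runDyn f s0 (extSeq T as) t) g (T - t) (as t)) *
        (if runDyn f s0 (extSeq T as) T = g then 1 else 0)

/-- Total variation distance between pmfs on a finite set. -/
noncomputable def tvDist {A : Type} [Fintype A] (p q : A → ℝ) : ℝ :=
  (1 / 2) * ∑ a, |p a - q a|

section Aux
variable {S A : Type} [Fintype S] [Fintype A] [Inhabited A] [DecidableEq S]

noncomputable def valFn (f : S → A → S) (q : ℕ → S → A → ℝ) (φ : S → ℝ) : ℕ → S → ℝ
  | 0, s => φ s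
  | n+1, s => ∑ a, q (n+1) s a * valFn f q φ n (f s a)

lemma runDyn_cons (f : S → A → S) (s : S) (a : A) (n : ℕ) (rest : Fin n → A) :
    ∀ t, t ≤ n → runDyn f s (extSeq (n+1) (Fin.cons a rest)) (t+1)
      = runDyn f (f s a) (extSeq n rest) t := by
  intro t
  induction t with
  | zero =>
      intro _
      simp [runDyn, extSeq]
  | succ t ih =>
      intro ht
      have ht' : t < n := ht
      have h1 : t + 1 < n + 1 := Nat.succ_lt_succ ht'
      show f (runDyn f s (extSeq (n+1) (Fin.cons a rest)) (t+1))
          (extSeq (n+1) (Fin.cons a rest) (t+1))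
        = f (runDyn f (f s a) (extSeq n rest) t) (extSeq n rest t)
      rw [ih (le_of_lt ht')]
      congr 1
      simp only [extSeq, dif_pos h1, dif_pos ht']
      have : (⟨t+1, h1⟩ : Fin (n+1)) = Fin.succ ⟨t, ht'⟩ := rfl
      rw [this, Fin.cons_succ]

lemma sum_eq_valFn (f : S → A → S) (q : ℕ → S → A → ℝ) (φ : S → ℝ) :
    ∀ (n : ℕ) (s : S),
      (∑ as : Fin n → A,
        (∏ t : Fin n, q (n - t) (runDyn f s (extSeq n as) t) (as t)) *
          φ (runDyn f s (extSeq n as) n)) = valFn f q φ n s := by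
  intro n
  induction n with
  | zero =>
      intro s
      simp [valFn, runDyn]
  | succ n ih =>
      intro s
      rw [← Equiv.sum_comp (Fin.consEquiv (fun _ : Fin (n+1) => A)), Fintype.sum_prod_type]
      simp only [show ∀ (a : A) (rest : Fin n → A),
          (Fin.consEquiv fun _ : Fin (n+1) => A) (a, rest) = Fin.cons a rest
        from fun _ _ => rfl]
      have key : ∀ (a : A) (rest : Fin n → A),
          (∏ t : Fin (n+1),
              q (n+1 - t) (runDyn f s (extSeq (n+1) (Fin.cons a rest)) t)
                ((Fin.cons a rest : Fin (n+1) → A) t)) *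
            φ (runDyn f s (extSeq (n+1) (Fin.cons a rest)) (n+1))
          = q (n+1) s a *
            ((∏ t : Fin n, q (n - t) (runDyn f (f s a) (extSeq n rest) t) (rest t)) *
              φ (runDyn f (f s a) (extSeq n rest) n)) := by
        intro a rest
        rw [Fin.prod_univ_succ]
        simp only [Fin.val_zero, Fin.val_succ, Fin.cons_zero, Fin.cons_succ, Nat.sub_zero,
          Nat.succ_sub_succ]
        rw [show runDyn f s (extSeq (n+1) (Fin.cons a rest)) 0 = s from rfl,
          runDyn_cons f s a n rest n le_rfl,
          Finset.prod_congr rfl (fun (t : Fin n) _ => by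
            rw [runDyn_cons f s a n rest t (le_of_lt t.isLt)]),
          mul_assoc]
      rw [Finset.sum_congr rfl (fun a _ => Finset.sum_congr rfl (fun rest _ => key a rest))]
      show (∑ a, ∑ rest : Fin n → A, q (n+1) s a * _) = valFn f q φ (n+1) s
      simp only [← Finset.mul_sum]
      show (∑ a, q (n+1) s a * _) = ∑ a, q (n+1) s a * valFn f q φ n (f s a)
      exact Finset.sum_congr rfl (fun a _ => by rw [ih (f s a)])

lemma valFn_mem (f : S → A → S) (q : ℕ → S → A → ℝ) (φ : S → ℝ)
    (hq : ∀ h s, (∀ a, 0 ≤ q h s a) ∧ ∑ a, q h s a = 1)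
    (hφ : ∀ s, 0 ≤ φ s ∧ φ s ≤ 1) :
    ∀ n s, 0 ≤ valFn f q φ n s ∧ valFn f q φ n s ≤ 1 := by
  intro n
  induction n with
  | zero => intro s; exact hφ s
  | succ n ih =>
      intro s
      constructor
      · exact Finset.sum_nonneg fun a _ =>
          mul_nonneg ((hq (n+1) s).1 a) (ih (f s a)).1
      · calc (∑ a, q (n+1) s a * valFn f q φ n (f s a)) ≤ ∑ a, q (n+1) s a * 1 :=
              Finset.sum_le_sum fun a _ =>
                mul_le_mul_of_nonneg_left (ih (f s a)).2 ((hq (n+1) s).1 a)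
          _ = 1 := by simp [(hq (n+1) s).2]

lemma sum_sub_mul_le (Δ V : A → ℝ) (h0 : ∑ a, Δ a = 0)
    (hV : ∀ a, 0 ≤ V a ∧ V a ≤ 1) :
    ∑ a, Δ a * V a ≤ (1/2) * ∑ a, |Δ a| := by
  have step : ∀ a, Δ a * V a ≤ (|Δ a| + Δ a) / 2 := by
    intro a
    rcases le_or_gt 0 (Δ a) with h | h
    · have : Δ a * V a ≤ Δ a * 1 := mul_le_mul_of_nonneg_left (hV a).2 h
      rw [abs_of_nonneg h]; linarith
    · have : Δ a * V a ≤ 0 := mul_nonpos_of_nonpos_of_nonneg (le_of_lt h) (hV a).1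
      rw [abs_of_neg h]; linarith
  calc ∑ a, Δ a * V a ≤ ∑ a, (|Δ a| + Δ a) / 2 := Finset.sum_le_sum fun a _ => step a
    _ = (1/2) * ∑ a, |Δ a| := by
        rw [show (∑ a, (|Δ a| + Δ a) / 2) = ((∑ a, |Δ a|) + ∑ a, Δ a) / 2 by
          rw [← Finset.sum_add_distrib, ← Finset.sum_div], h0]
        ring

lemma valFn_diff (f : S → A → S) (q q' : ℕ → S → A → ℝ) (φ : S → ℝ)
    (hq : ∀ h s, (∀ a, 0 ≤ q h s a) ∧ ∑ a, q h s a = 1)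
    (hq' : ∀ h s, (∀ a, 0 ≤ q' h s a) ∧ ∑ a, q' h s a = 1)
    (hφ : ∀ s, 0 ≤ φ s ∧ φ s ≤ 1) (ε : ℝ)
    (hε : ∀ h s, (1/2) * ∑ a, |q' h s a - q h s a| ≤ ε) :
    ∀ n s, valFn f q' φ n s - valFn f q φ n s ≤ ε * n := by
  intro n
  induction n with
  | zero => intro s; simp [valFn]
  | succ n ih =>
      intro s
      have expand : valFn f q' φ (n+1) s - valFn f q φ (n+1) s
          = (∑ a, q' (n+1) s a * (valFn f q' φ n (f s a) - valFn f q φ n (f s a)))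
            + ∑ a, (q' (n+1) s a - q (n+1) s a) * valFn f q φ n (f s a) := by
        show (∑ a, q' (n+1) s a * valFn f q' φ n (f s a))
            - (∑ a, q (n+1) s a * valFn f q φ n (f s a)) = _
        rw [← Finset.sum_add_distrib, ← Finset.sum_sub_distrib]
        exact Finset.sum_congr rfl fun a _ => by ring
      rw [expand]
      have h1 : (∑ a, q' (n+1) s a * (valFn f q' φ n (f s a) - valFn f q φ n (f s a)))
          ≤ ε * n := by
        calc (∑ a, q' (n+1) s a * (valFn f q' φ n (f s a) - valFn f q φ n (f s a)))
            ≤ ∑ a, q' (n+1) s a * (ε * n) :=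
              Finset.sum_le_sum fun a _ =>
                mul_le_mul_of_nonneg_left (ih (f s a)) ((hq' (n+1) s).1 a)
          _ = ε * n := by rw [← Finset.sum_mul, (hq' (n+1) s).2, one_mul]
      have h2 : (∑ a, (q' (n+1) s a - q (n+1) s a) * valFn f q φ n (f s a)) ≤ ε := by
        have := sum_sub_mul_le (fun a => q' (n+1) s a - q (n+1) s a)
          (fun a => valFn f q φ n (f s a))
          (by rw [Finset.sum_sub_distrib, (hq' (n+1) s).2, (hq (n+1) s).2, sub_self])
          (fun a => valFn_mem f q φ hq hφ n (f s a))
        exact le_trans this (hε (n+1) s)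
      push_cast
      linarith

end Aux

/-- In a deterministic finite-horizon environment with horizon `T`, if
`D_TV(π(·|s,g,h), π*(·|s,g,h)) ≤ ε` for all states, goals and horizons, where `π*` is an
optimal goal-reaching policy, then `J(π*) − J(π) ≤ εT`. -/
theorem gcsl_performance_bound {S A : Type} [Fintype S] [Fintype A] [Inhabited A]
    [DecidableEq S]
    (f : S → A → S) (T : ℕ) (s0 : S) (pg : S → ℝ)
    (hpg0 : ∀ g, 0 ≤ pg g) (hpg1 : ∑ g, pg g = 1)
    (π πstar : S → S → ℕ → A → ℝ)
    (hπ : ∀ s g h, (∀ a, 0 ≤ π s g h a) ∧ ∑ a, π s g h a = 1)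
    (hπstar : ∀ s g h, (∀ a, 0 ≤ πstar s g h a) ∧ ∑ a, πstar s g h a = 1)
    (hopt : ∀ π' : S → S → ℕ → A → ℝ,
      (∀ s g h, (∀ a, 0 ≤ π' s g h a) ∧ ∑ a, π' s g h a = 1) →
      Jdet f T s0 pg π' ≤ Jdet f T s0 pg πstar)
    (ε : ℝ) (htv : ∀ s g h, tvDist (π s g h) (πstar s g h) ≤ ε) :
    Jdet f T s0 pg πstar - Jdet f T s0 pg π ≤ ε * T := by
  have rew : ∀ ρ : S → S → ℕ → A → ℝ, Jdet f T s0 pg ρ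
      = ∑ g, pg g *
          valFn f (fun h s a => ρ s g h a) (fun s' => if s' = g then (1:ℝ) else 0) T s0 := by
    intro ρ
    unfold Jdet
    refine Finset.sum_congr rfl fun g _ => ?_
    rw [← sum_eq_valFn f (fun h s a => ρ s g h a)
      (fun s' => if s' = g then (1:ℝ) else 0) T s0]
  rw [rew π, rew πstar, ← Finset.sum_sub_distrib]
  have hφ : ∀ g : S, ∀ s' : S,
      (0:ℝ) ≤ (if s' = g then (1:ℝ) else 0) ∧ (if s' = g then (1:ℝ) else 0) ≤ 1 := by
    intro g s'; split_ifs <;> norm_num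
  have bound : ∀ g ∈ Finset.univ,
      pg g * valFn f (fun h s a => πstar s g h a)
          (fun s' => if s' = g then (1:ℝ) else 0) T s0
        - pg g * valFn f (fun h s a => π s g h a)
          (fun s' => if s' = g then (1:ℝ) else 0) T s0
      ≤ pg g * (ε * T) := by
    intro g _
    rw [← mul_sub]
    refine mul_le_mul_of_nonneg_left ?_ (hpg0 g)
    refine valFn_diff f (fun h s a => π s g h a) (fun h s a => πstar s g h a)
      (fun s' => if s' = g then (1:ℝ) else 0)
      (fun h s => hπ s g h) (fun h s => hπstar s g h) (hφ g) ε ?_ T s0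
    intro h s
    have := htv s g h
    unfold tvDist at this
    calc (1/2) * ∑ a, |πstar s g h a - π s g h a|
        = (1/2) * ∑ a, |π s g h a - πstar s g h a| := by
          congr 1
          exact Finset.sum_congr rfl fun a _ => abs_sub_comm _ _
      _ ≤ ε := this
  calc (∑ g, (pg g * valFn f (fun h s a => πstar s g h a)
            (fun s' => if s' = g then (1:ℝ) else 0) T s0
          - pg g * valFn f (fun h s a => π s g h a)
            (fun s' => if s' = g then (1:ℝ) else 0) T s0))
      ≤ ∑ g, pg g * (ε * T) := Finset.sum_le_sum bound
    _ = ε * T := by rw [← Finset.sum_mul, hpg1, one_mul]
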